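/- If (X,T) is transitive and some transitive point is a mean sensitive point, then (X,T) is mean sensitive. -/

import Mathlib

open Filter Topology MeasureTheory
open scoped Classical

noncomputable def avgDist {Z : Type*} [MetricSpace Z] (R : Z → Z) (x y : Z) (n : ℕ) : ℝ :=
  (n : ℝ)⁻¹ * ∑ i ∈ Finset.range n, dist (R^[i] x) (R^[i] y)

def MeanEquicontinuous {Z : Type*} [MetricSpace Z] (R : Z → Z) : Prop :=
  ∀ ε > 0, ∃ δ > 0, ∀ x y : Z, dist x y < δ →
    Filter.limsup (avgDist R x y) Filter.atTop < ε

def MeanEqPtAt {Z : Type*} [MetricSpace Z] (R : Z → Z) (x : Z) : Prop :=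
  ∀ ε > 0, ∃ δ > 0, ∀ y : Z, dist x y < δ →
    Filter.limsup (avgDist R x y) Filter.atTop < ε

def MeanSensitive {Z : Type*} [MetricSpace Z] (R : Z → Z) : Prop :=
  ∃ δ > 0, ∀ x : Z, ∀ ε > 0, ∃ y : Z, dist x y < ε ∧
    δ < Filter.limsup (avgDist R x y) Filter.atTop

/-! The limsup of mean distances along a pair of orbits does not drop when both points are moved
forward along their orbits, since finitely many initial terms do not affect a Cesàro limsup.
Given a mean sensitive transitive point `x` with constant `δ` and any `z`, pick `T^[n] x` close
to `z` and, by continuity of `T^[n]`, a `y` so close to `x` that `T^[n] y` is also close to `z`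
while `x, y` (hence `T^[n] x, T^[n] y`) are more than `δ` apart in mean. By the triangle
inequality one of `T^[n] x, T^[n] y` is more than `δ / 2` apart from `z` in mean. -/

section avgDist

variable {Z : Type*} [MetricSpace Z] (R : Z → Z)

theorem avgDist_nonneg (x y : Z) (n : ℕ) : 0 ≤ avgDist R x y n := by
  unfold avgDist
  positivity

theorem isBoundedUnder_ge_avgDist (x y : Z) : IsBoundedUnder (· ≥ ·) atTop (avgDist R x y) :=
  isBoundedUnder_of ⟨0, avgDist_nonneg R x y⟩

theorem avgDist_le_add (z a b : Z) (n : ℕ) :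
    avgDist R a b n ≤ avgDist R z a n + avgDist R z b n := by
  unfold avgDist
  rw [← mul_add, ← Finset.sum_add_distrib]
  gcongr with i
  exact dist_triangle_left _ _ _

theorem avgDist_add_le (x y : Z) (n : ℕ) {m : ℕ} (hm : 0 < m) :
    avgDist R x y (m + n) ≤
      avgDist R (R^[n] x) (R^[n] y) m + (∑ i ∈ Finset.range n, dist (R^[i] x) (R^[i] y)) / m := by
  have hsplit : ∑ i ∈ Finset.range (n + m), dist (R^[i] x) (R^[i] y) =
      (∑ i ∈ Finset.range n, dist (R^[i] x) (R^[i] y)) +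
        ∑ i ∈ Finset.range m, dist (R^[i] (R^[n] x)) (R^[i] (R^[n] y)) := by
    rw [Finset.sum_range_add]
    congr 1
    refine Finset.sum_congr rfl fun i _ => ?_
    rw [add_comm n i, Function.iterate_add_apply, Function.iterate_add_apply]
  have hinv : ((m + n : ℕ) : ℝ)⁻¹ ≤ (m : ℝ)⁻¹ :=
    inv_anti₀ (by exact_mod_cast hm) (by exact_mod_cast Nat.le_add_right m n)
  unfold avgDist
  rw [add_comm m n, hsplit, add_comm n m]
  calc _ ≤ (m : ℝ)⁻¹ * ((∑ i ∈ Finset.range n, dist (R^[i] x) (R^[i] y)) +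
          ∑ i ∈ Finset.range m, dist (R^[i] (R^[n] x)) (R^[i] (R^[n] y))) := by
        gcongr
    _ = _ := by ring

variable [BoundedSpace Z]

theorem avgDist_le_diam (x y : Z) (n : ℕ) : avgDist R x y n ≤ Metric.diam (Set.univ : Set Z) := by
  have hdist : ∀ p q : Z, dist p q ≤ Metric.diam (Set.univ : Set Z) := fun p q =>
    Metric.dist_le_diam_of_mem (Bornology.isBounded_univ.2 ‹_›) (Set.mem_univ p) (Set.mem_univ q)
  unfold avgDist
  rcases Nat.eq_zero_or_pos n with rfl | hn
  · simpa using Metric.diam_nonneg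
  · calc (n : ℝ)⁻¹ * ∑ i ∈ Finset.range n, dist (R^[i] x) (R^[i] y)
        ≤ (n : ℝ)⁻¹ * ∑ _i ∈ Finset.range n, Metric.diam (Set.univ : Set Z) := by
          gcongr with i
          exact hdist _ _
      _ = Metric.diam (Set.univ : Set Z) := by
          rw [Finset.sum_const, Finset.card_range, nsmul_eq_mul]
          field_simp

theorem isBoundedUnder_le_avgDist (x y : Z) : IsBoundedUnder (· ≤ ·) atTop (avgDist R x y) :=
  isBoundedUnder_of ⟨_, avgDist_le_diam R x y⟩

theorem limsup_avgDist_le_add (z a b : Z) :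
    limsup (avgDist R a b) atTop ≤ limsup (avgDist R z a) atTop + limsup (avgDist R z b) atTop :=
  calc limsup (avgDist R a b) atTop
      ≤ limsup (avgDist R z a + avgDist R z b) atTop :=
        limsup_le_limsup (Eventually.of_forall (avgDist_le_add R z a b))
          (isBoundedUnder_ge_avgDist R a b).isCoboundedUnder_le
          (isBoundedUnder_le_add (isBoundedUnder_le_avgDist R z a) (isBoundedUnder_le_avgDist R z b))
    _ ≤ limsup (avgDist R z a) atTop + limsup (avgDist R z b) atTop :=
        limsup_add_le (isBoundedUnder_ge_avgDist R z a) (isBoundedUnder_le_avgDist R z a)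
          (isBoundedUnder_ge_avgDist R z b).isCoboundedUnder_le (isBoundedUnder_le_avgDist R z b)

theorem half_lt_limsup_avgDist_or {δ : ℝ} {a b : Z} (hab : δ < limsup (avgDist R a b) atTop)
    (z : Z) : δ / 2 < limsup (avgDist R z a) atTop ∨ δ / 2 < limsup (avgDist R z b) atTop := by
  by_contra! h
  linarith [limsup_avgDist_le_add R z a b]

theorem limsup_avgDist_le_limsup_avgDist_iterate (x y : Z) (n : ℕ) :
    limsup (avgDist R x y) atTop ≤ limsup (avgDist R (R^[n] x) (R^[n] y)) atTop := by
  set S := ∑ i ∈ Finset.range n, dist (R^[i] x) (R^[i] y)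
  have hS : Tendsto (fun m : ℕ => S / m) atTop (𝓝 0) := tendsto_const_div_atTop_nhds_zero_nat S
  rw [← limsup_nat_add _ n]
  calc limsup (fun m => avgDist R x y (m + n)) atTop
      ≤ limsup (avgDist R (R^[n] x) (R^[n] y) + fun m : ℕ => S / m) atTop :=
        limsup_le_limsup
          ((eventually_gt_atTop 0).mono fun m hm => avgDist_add_le R x y n hm)
          (isBoundedUnder_of ⟨0, fun m => avgDist_nonneg R x y (m + n)⟩).isCoboundedUnder_le
          (isBoundedUnder_le_add (isBoundedUnder_le_avgDist R _ _) hS.isBoundedUnder_le)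
    _ ≤ limsup (avgDist R (R^[n] x) (R^[n] y)) atTop + limsup (fun m : ℕ => S / m) atTop :=
        limsup_add_le (isBoundedUnder_ge_avgDist R _ _) (isBoundedUnder_le_avgDist R _ _)
          hS.isCoboundedUnder_le hS.isBoundedUnder_le
    _ = limsup (avgDist R (R^[n] x) (R^[n] y)) atTop := by rw [hS.limsup_eq, add_zero]

end avgDist

theorem meanSensitive_of_transitive_meanSensitive_point
    {X : Type*} [MetricSpace X] [CompactSpace X] (T : X → X) (hT : Continuous T)
    (x : X) (hx : Dense (Set.range fun n : ℕ => T^[n] x))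
    (hsen : ∃ δ > 0, ∀ ε > 0, ∃ y : X, dist x y < ε ∧
      δ < Filter.limsup (avgDist T x y) Filter.atTop) :
    MeanSensitive T := by
  obtain ⟨δ, hδ, hsen⟩ := hsen
  refine ⟨δ / 2, half_pos hδ, fun z ε hε => ?_⟩
  obtain ⟨_, ⟨n, rfl⟩, hzx⟩ := hx.exists_dist_lt z (half_pos hε)
  obtain ⟨η, hη, hcont⟩ :=
    Metric.continuousAt_iff.1 (hT.iterate n).continuousAt (ε / 2) (half_pos hε)
  obtain ⟨y, hxy, hfar⟩ := hsen η hη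
  have hzy : dist z (T^[n] y) < ε := calc
    dist z (T^[n] y) ≤ dist z (T^[n] x) + dist (T^[n] y) (T^[n] x) := dist_triangle_right _ _ _
    _ < ε / 2 + ε / 2 := add_lt_add hzx (hcont (by rwa [dist_comm]))
    _ = ε := add_halves ε
  rcases half_lt_limsup_avgDist_or T
    (hfar.trans_le (limsup_avgDist_le_limsup_avgDist_iterate T x y n)) z with h | h
  · exact ⟨T^[n] x, hzx.trans (half_lt_self hε), h⟩
  · exact ⟨T^[n] y, hzy, h⟩
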